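/- arXiv:2508.12055 — 6 statements merged into one kernel-verified Lean document; each statement's English description precedes it below -/
import Mathlib

section
/- For any natural numbers n ≥ 1 and r ≥ 1, the sum of multinomial coefficients r!/(k₁!·k₂!·k₃!⋯) over all sequences (k₁, k₂, k₃, …) of nonnegative integers with k₁ + k₂ + k₃ + ⋯ = r and 1·k₁ + 2·k₂ + 3·k₃ + ⋯ = n equals the binomial coefficient C(n−1, r−1). -/
/-!
Expanding `(X + X² + ⋯ + Xⁿ) ^ r` by the multinomial theorem, the multiplicity vector `k`
contributes `multinomial k • X ^ (∑ i * kᵢ)`, so the sum is the coefficient of `Xⁿ` in that power.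
Modulo `X ^ (n + 1)` the power agrees with `(X / (1 - X)) ^ r = X ^ r * (1 - X) ^ (-r)`, whose
coefficient of `Xⁿ` is `(n - 1).choose (r - 1)`.
-/

open Finset PowerSeries

namespace PowerSeries

theorem coeff_sum_X_pow_pow {R : Type*} [CommSemiring R] (s : Finset ℕ) (r n : ℕ) :
    coeff n ((∑ i ∈ s, X ^ i : R⟦X⟧) ^ r) =
      ∑ k ∈ piAntidiag s r, if ∑ i ∈ s, i * k i = n then (Nat.multinomial s k : R) else 0 := by
  rw [sum_pow_eq_sum_piAntidiag, map_sum]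
  refine sum_congr rfl fun k _ => ?_
  have hprod : ∏ i ∈ s, ((X : R⟦X⟧) ^ i) ^ k i = X ^ ∑ i ∈ s, i * k i := by
    simp only [← pow_mul, prod_pow_eq_pow_sum]
  rw [hprod, ← map_natCast (C (R := R)), coeff_C_mul, coeff_X_pow, mul_ite, mul_one, mul_zero]
  exact if_congr eq_comm rfl rfl

variable {R : Type*} [CommRing R]

theorem coeff_pow_eq_of_X_pow_dvd_sub {f g : R⟦X⟧} {n : ℕ} (h : X ^ (n + 1) ∣ f - g) (r : ℕ) :
    coeff n (f ^ r) = coeff n (g ^ r) := by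
  have hpow : X ^ (n + 1) ∣ f ^ r - g ^ r := h.trans (sub_dvd_pow_sub_pow f g r)
  rw [← sub_eq_zero, ← map_sub]
  exact X_pow_dvd_iff.1 hpow n n.lt_succ_self

theorem X_pow_succ_dvd_X_mul_mk_one_sub_sum (n : ℕ) :
    X ^ (n + 1) ∣ X * mk 1 - ∑ i ∈ Icc 1 n, (X : R⟦X⟧) ^ i := by
  refine X_pow_dvd_iff.2 fun m hm => ?_
  simp only [map_sub, map_sum, coeff_X_pow, sum_ite_eq, mem_Icc]
  cases m with
  | zero => simp
  | succ m => simp [show m < n by omega]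

theorem coeff_X_mul_mk_one_pow (m r : ℕ) :
    coeff (m + 1) ((X * mk 1 : R⟦X⟧) ^ (r + 1)) = m.choose r := by
  rw [mul_pow, mk_one_pow_eq_mk_choose_add, coeff_X_pow_mul', coeff_mk]
  split_ifs with h
  · congr 2; omega
  · rw [Nat.choose_eq_zero_of_lt (by omega), Nat.cast_zero]

theorem coeff_sum_Icc_X_pow_pow (m r : ℕ) :
    coeff (m + 1) ((∑ i ∈ Icc 1 (m + 1), (X : R⟦X⟧) ^ i) ^ (r + 1)) = m.choose r := by
  rw [← coeff_pow_eq_of_X_pow_dvd_sub (X_pow_succ_dvd_X_mul_mk_one_sub_sum _),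
    coeff_X_mul_mk_one_pow]

end PowerSeries

theorem Finset.sum_finsuppAntidiag_coe {ι μ M : Type*} [DecidableEq ι] [AddCommMonoid μ]
    [HasAntidiagonal μ] [DecidableEq μ] [AddCommMonoid M] (s : Finset ι) (r : μ)
    (g : (ι → μ) → M) :
    ∑ k ∈ finsuppAntidiag s r, g k = ∑ f ∈ piAntidiag s r, g f := by
  refine sum_nbij (⇑) (fun k hk => ?_) DFunLike.coe_injective.injOn (fun f hf => ?_) fun _ _ => rfl
  · rw [mem_finsuppAntidiag] at hk
    exact mem_piAntidiag.2 ⟨hk.1, fun i hi => hk.2 (Finsupp.mem_support_iff.2 hi)⟩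
  · rw [mem_coe, mem_piAntidiag] at hf
    refine ⟨Finsupp.onFinset s f hf.2, ?_, rfl⟩
    rw [mem_coe, mem_finsuppAntidiag]
    exact ⟨hf.1, Finsupp.support_onFinset_subset⟩

theorem Finsupp.support_subset_Icc_of_sum_mul_eq {k : ℕ →₀ ℕ} {n : ℕ} (h0 : k 0 = 0)
    (hn : (k.sum fun i v => i * v) = n) : k.support ⊆ Icc 1 n := by
  intro i hi
  have hi0 : i ≠ 0 := by rintro rfl; exact Finsupp.mem_support_iff.1 hi h0
  have hle : i * k i ≤ n := hn ▸ Finset.single_le_sum (f := fun i => i * k i) (by simp) hi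
  have hki : 0 < k i := Nat.pos_of_ne_zero (Finsupp.mem_support_iff.1 hi)
  exact mem_Icc.2 ⟨Nat.one_le_iff_ne_zero.2 hi0, (Nat.le_mul_of_pos_right i hki).trans hle⟩

def Nat.partitionMultiplicities (n r : ℕ) : Finset (ℕ →₀ ℕ) :=
  {k ∈ finsuppAntidiag (Icc 1 n) r | (k.sum fun i v => i * v) = n}

theorem Nat.mem_partitionMultiplicities {n r : ℕ} {k : ℕ →₀ ℕ} :
    k ∈ partitionMultiplicities n r ↔
      k 0 = 0 ∧ (k.sum fun _ v => v) = r ∧ (k.sum fun i v => i * v) = n := by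
  rw [partitionMultiplicities, mem_filter, mem_finsuppAntidiag']
  constructor
  · rintro ⟨⟨hr, hsupp⟩, hn⟩
    exact ⟨Finsupp.notMem_support_iff.1 fun h => by simpa using hsupp h, hr, hn⟩
  · rintro ⟨h0, hr, hn⟩
    exact ⟨⟨hr, Finsupp.support_subset_Icc_of_sum_mul_eq h0 hn⟩, hn⟩

/-- Fine's Identity: the sum of multinomial coefficients over all partitions of `n`
into exactly `r` parts (encoded by multiplicities `k i` of part `i`, indexed from 1)
equals `C(n-1, r-1)`. -/
theorem fine_identity (n r : ℕ) (hn : 1 ≤ n) (hr : 1 ≤ r) :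
    ∑ᶠ k : {k : ℕ →₀ ℕ //
        k 0 = 0 ∧ (k.sum fun _ v => v) = r ∧ (k.sum fun i v => i * v) = n},
      Nat.multinomial (k : ℕ →₀ ℕ).support (k : ℕ →₀ ℕ) = (n - 1).choose (r - 1) := by
  obtain ⟨m, rfl⟩ := Nat.exists_eq_add_of_le' hn
  obtain ⟨s, rfl⟩ := Nat.exists_eq_add_of_le' hr
  have hmem (k : ℕ →₀ ℕ) := Nat.mem_partitionMultiplicities (n := m + 1) (r := s + 1) (k := k)
  let := Fintype.subtype _ hmem
  rw [finsum_eq_sum_of_fintype,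
    ← sum_subtype _ hmem fun k : ℕ →₀ ℕ => Nat.multinomial k.support k,
    Nat.partitionMultiplicities, sum_filter, Nat.add_sub_cancel, Nat.add_sub_cancel]
  apply Nat.cast_injective (R := ℤ)
  rw [← coeff_sum_Icc_X_pow_pow, coeff_sum_X_pow_pow, ← sum_finsuppAntidiag_coe, Nat.cast_sum]
  refine sum_congr rfl fun k hk => ?_
  have hsupp := (mem_finsuppAntidiag.1 hk).2
  rw [Finsupp.sum_of_support_subset k hsupp _ (by simp),
    Finsupp.multinomial_of_support_subset hsupp,
    Finsupp.multinomial_of_support_subset subset_rfl]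
  split_ifs <;> simp
end

section
/- For any natural number n ≥ 1, the sum over all partitions of n (encoded by multiplicity sequences (k₁, k₂, …) with ∑ᵢ i·kᵢ = n) of the multinomial coefficients (k₁+k₂+⋯)!/(k₁!·k₂!⋯) equals 2^(n−1). -/
/-!
Forgetting the order of the blocks maps the `2 ^ (n - 1)` compositions of `n` onto the
partitions of `n`. The fibre over a partition with multiplicities `k` consists of the distinct
orderings of its parts, and there are `(k₁ + k₂ + ⋯)! / (k₁! k₂! ⋯)` of them: classifying the
orderings by their first entry shows that both counts satisfy the same recursion.
-/

open Finset

namespace Multiset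

variable {α : Type*} [DecidableEq α]

theorem card_mul_countPerms_erase {a : α} {m : Multiset α} (h : a ∈ m) :
    card m * (m.erase a).countPerms = count a m * m.countPerms := by
  obtain ⟨m, rfl⟩ := exists_cons_of_mem h
  -- after splitting off the copies of `a`, this is `(N + 1) * C(N, k) = C(N + 1, k + 1) * (k + 1)`
  rw [erase_cons_head, countPerms_filter_ne a m, countPerms_filter_ne a (a ::ₘ m),
    filter_cons_of_neg _ (by simp), card_cons, count_cons_self, ← mul_assoc, ← mul_assoc,
    Nat.add_one_mul_choose_eq, mul_comm (count a m + 1)]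

theorem sum_countPerms_erase {m : Multiset α} (hm : m ≠ 0) :
    ∑ a ∈ m.toFinset, (m.erase a).countPerms = m.countPerms := by
  refine Nat.eq_of_mul_eq_mul_left (card_pos.mpr hm) ?_
  calc card m * ∑ a ∈ m.toFinset, (m.erase a).countPerms
      = ∑ a ∈ m.toFinset, count a m * m.countPerms := by
        rw [mul_sum]
        exact sum_congr rfl fun a ha => card_mul_countPerms_erase (mem_toFinset.mp ha)
    _ = card m * m.countPerms := by rw [← sum_mul, toFinset_sum_count_eq]

omit [DecidableEq α] in
theorem mem_lists_iff_coe_eq {m : Multiset α} {l : List α} :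
    l ∈ m.lists ↔ (l : Multiset α) = m := by
  rw [mem_lists_iff, eq_comm]; rfl

theorem toFinset_lists_eq_biUnion {m : Multiset α} (hm : m ≠ 0) :
    m.lists.toFinset = m.toFinset.biUnion fun a => (m.erase a).lists.toFinset.image (a :: ·) := by
  ext (_ | ⟨a, l⟩)
  · simpa [mem_lists_iff_coe_eq, eq_comm] using hm
  · simp only [mem_toFinset, mem_lists_iff_coe_eq, Finset.mem_biUnion, Finset.mem_image,
      List.cons.injEq]
    constructor
    · rintro rfl
      exact ⟨a, by simp, l, by simp, rfl, rfl⟩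
    · rintro ⟨b, hb, l', hl', rfl, rfl⟩
      rw [← cons_coe, hl', cons_erase hb]

theorem card_toFinset_lists (m : Multiset α) : #m.lists.toFinset = m.countPerms := by
  induction m using strongInductionOn with
  | ih m ih =>
    rcases eq_or_ne m 0 with rfl | hm
    · rw [countPerms_zero, ← coe_nil, lists_coe]; simp
    rw [toFinset_lists_eq_biUnion hm, card_biUnion, ← sum_countPerms_erase hm]
    · refine sum_congr rfl fun a ha => ?_
      rw [card_image_of_injective _ (List.cons_injective), ih _ (erase_lt.mpr (mem_toFinset.mp ha))]
    · intro a _ b _ hab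
      simp only [Function.onFun, Finset.disjoint_left, Finset.mem_image]
      rintro _ ⟨l, _, rfl⟩ ⟨l', _, h⟩
      exact hab (List.cons.inj h).1.symm

end Multiset

theorem Finsupp.sum_toMultiset_eq_sum_mul (k : ℕ →₀ ℕ) :
    (toMultiset k).sum = k.sum fun i v => i * v := by
  simp only [sum_toMultiset, smul_eq_mul, mul_comm]

namespace Nat.Partition

theorem card_filter_ofComposition_eq {n : ℕ} (p : n.Partition) :
    #{c : Composition n | ofComposition n c = p} = p.parts.countPerms := by
  rw [← Multiset.card_toFinset_lists]
  refine card_nbij (fun c => c.blocks) (fun c hc => ?_) (fun c _ c' _ h => Composition.ext h)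
    fun l hl => ?_
  · rw [mem_coe, mem_filter] at hc
    rw [mem_coe, Multiset.mem_toFinset, Multiset.mem_lists_iff_coe_eq, ← hc.2]
    rfl
  · rw [mem_coe, Multiset.mem_toFinset, Multiset.mem_lists_iff_coe_eq] at hl
    refine ⟨⟨l, fun hi => p.parts_pos (hl ▸ Multiset.mem_coe.mpr hi), ?_⟩, ?_, rfl⟩
    · rw [← Multiset.sum_coe, hl, p.parts_sum]
    · simp [Nat.Partition.ext_iff, hl]

theorem sum_countPerms_parts (n : ℕ) : ∑ p : n.Partition, p.parts.countPerms = 2 ^ (n - 1) := by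
  rw [← composition_card, Fintype.card, card_eq_sum_card_fiberwise (f := ofComposition n)
    (t := univ) fun _ _ => mem_univ _]
  simp only [card_filter_ofComposition_eq]

noncomputable def multiplicitiesEquiv (n : ℕ) :
    n.Partition ≃ {k : ℕ →₀ ℕ // k 0 = 0 ∧ (k.sum fun i v => i * v) = n} where
  toFun p := ⟨Multiset.toFinsupp p.parts, by simpa using fun h => (p.parts_pos h).ne rfl, by
    rw [← Finsupp.sum_toMultiset_eq_sum_mul, Multiset.toFinsupp_toMultiset, p.parts_sum]⟩
  invFun k := ⟨Finsupp.toMultiset k, fun hi => Nat.pos_of_ne_zero fun h => by simp_all [k.2.1],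
    by rw [Finsupp.sum_toMultiset_eq_sum_mul, k.2.2]⟩
  left_inv p := Nat.Partition.ext (Multiset.toFinsupp_toMultiset p.parts)
  right_inv k := Subtype.ext (Finsupp.toMultiset_toFinsupp k.1)

end Nat.Partition

theorem sum_multinomial_partitions_eq_two_pow_general (n : ℕ) :
    ∑ᶠ k : {k : ℕ →₀ ℕ // k 0 = 0 ∧ (k.sum fun i v => i * v) = n},
      Nat.multinomial (k : ℕ →₀ ℕ).support (k : ℕ →₀ ℕ) = 2 ^ (n - 1) := by
  rw [← finsum_comp_equiv (Nat.Partition.multiplicitiesEquiv n), finsum_eq_sum_of_fintype]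
  exact Nat.Partition.sum_countPerms_parts n

/-- The sum of multinomial coefficients over all partitions of `n ≥ 1`
(encoded by multiplicity sequences) equals `2^(n-1)`. -/
theorem sum_multinomial_partitions_eq_two_pow (n : ℕ) (hn : 1 ≤ n) :
    ∑ᶠ k : {k : ℕ →₀ ℕ // k 0 = 0 ∧ (k.sum fun i v => i * v) = n},
      Nat.multinomial (k : ℕ →₀ ℕ).support (k : ℕ →₀ ℕ) = 2 ^ (n - 1) :=
  sum_multinomial_partitions_eq_two_pow_general n
end

section
/- The hyper-Catalan number C_m = (E_m − 1)! / ((V_m − 1)! · ∏_{i≥2} mᵢ!) is a positive integer for every finitely supported m : ℕ → ℕ (indexed from 2), where V_m = 2 + ∑(i−1)mᵢ and E_m = 1 + ∑ i·mᵢ. -/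
/-!
With `n = ∑ (i - 1) mᵢ` and `s = ∑ mᵢ`, the vanishing of `mᵢ` for `i < 2` gives
`V_m - 1 = n + 1` and `E_m - 1 = n + s`, so the claim is that `D = (n + 1)! ∏ mᵢ!` divides
`(n + s)!`. Clearly `D ∣ (n + 1) (n + s)!`, and peeling one factor `mⱼ` off `mⱼ!` gives
`D ∣ mⱼ (n + s)!` for every `j`, hence `D ∣ gcd(mⱼ) (n + s)!`. Since `gcd(mⱼ)` divides `n`,
it is coprime to `n + 1`, so `D ∣ (n + s)!`.
-/

open Finset Nat

namespace Nat

variable {ι : Type*} (s : Finset ι) (f : ι → ℕ) (n : ℕ)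

theorem factorial_mul_prod_factorial_dvd_factorial_add_sum :
    n ! * ∏ i ∈ s, (f i)! ∣ (n + ∑ i ∈ s, f i)! :=
  (mul_dvd_mul_left _ (prod_factorial_dvd_factorial_sum s f)).trans
    (factorial_mul_factorial_dvd_factorial_add _ _)

theorem succ_factorial_mul_prod_factorial_dvd_mul_factorial_add_sum {j : ι} (hj : j ∈ s) :
    (n + 1)! * ∏ i ∈ s, (f i)! ∣ f j * (n + ∑ i ∈ s, f i)! := by
  classical
  rcases eq_or_ne (f j) 0 with hfj | hfj
  · simp [hfj]
  have hprod : ∏ i ∈ s, (f i)! = f j * ((f j - 1)! * ∏ i ∈ s.erase j, (f i)!) := by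
    rw [← mul_prod_erase s _ hj, ← mul_factorial_pred hfj, mul_assoc]
  have hsum : n + ∑ i ∈ s, f i = (n + 1) + (f j - 1 + ∑ i ∈ s.erase j, f i) := by
    rw [← add_sum_erase s _ hj]
    omega
  rw [hprod, hsum, mul_left_comm]
  exact mul_dvd_mul_left _ <| (mul_dvd_mul_left _
    (factorial_mul_prod_factorial_dvd_factorial_add_sum _ _ _)).trans
      (factorial_mul_factorial_dvd_factorial_add _ _)

theorem succ_factorial_mul_prod_factorial_dvd_factorial_add_sum (hn : s.gcd f ∣ n) :
    (n + 1)! * ∏ i ∈ s, (f i)! ∣ (n + ∑ i ∈ s, f i)! := by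
  set F := (n + ∑ i ∈ s, f i)!
  have h_succ : (n + 1)! * ∏ i ∈ s, (f i)! ∣ (n + 1) * F := by
    rw [factorial_succ, mul_assoc]
    exact mul_dvd_mul_left _ (factorial_mul_prod_factorial_dvd_factorial_add_sum s f n)
  have h_gcd : (n + 1)! * ∏ i ∈ s, (f i)! ∣ s.gcd f * F := by
    have := Finset.dvd_gcd fun j hj =>
      succ_factorial_mul_prod_factorial_dvd_mul_factorial_add_sum s f n hj
    rwa [Finset.gcd_mul_right, normalize_eq] at this
  have hcop : Coprime (n + 1) (s.gcd f) :=
    Coprime.coprime_dvd_right hn (coprime_self_add_left.mpr (coprime_one_left n))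
  simpa [Nat.gcd_mul_right, hcop] using Nat.dvd_gcd h_succ h_gcd

end Nat

/-- The hyper-Catalan number `C_m = (E_m - 1)! / ((V_m - 1)! ∏ (m i)!)` is a
positive integer: the denominator divides the numerator and the quotient is positive. -/
theorem hyperCatalan_pos_int (m : ℕ →₀ ℕ) (hm : ∀ i < 2, m i = 0) :
    (((2 + m.sum fun i v => (i - 1) * v) - 1).factorial *
        m.prod fun _ v => v.factorial) ∣ ((1 + m.sum fun i v => i * v) - 1).factorial ∧
    0 < ((1 + m.sum fun i v => i * v) - 1).factorial /
        (((2 + m.sum fun i v => (i - 1) * v) - 1).factorial *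
          m.prod fun _ v => v.factorial) := by
  classical
  have hsum :
      (m.sum fun i v => i * v) = (m.sum fun i v => (i - 1) * v) + ∑ i ∈ m.support, m i := by
    rw [Finsupp.sum, Finsupp.sum, ← sum_add_distrib]
    refine sum_congr rfl fun i hi => ?_
    have : 2 ≤ i := by
      by_contra! h
      exact Finsupp.mem_support_iff.mp hi (hm i h)
    rw [← add_one_mul, Nat.sub_add_cancel (by omega : 1 ≤ i)]
  have hgcd : m.support.gcd m ∣ m.sum fun i v => (i - 1) * v :=
    dvd_sum fun i hi => (Finset.gcd_dvd hi).mul_left _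
  have hdvd := succ_factorial_mul_prod_factorial_dvd_factorial_add_sum m.support m _ hgcd
  rw [show (2 + m.sum fun i v => (i - 1) * v) - 1 = (m.sum fun i v => (i - 1) * v) + 1 by omega,
    show (1 + m.sum fun i v => i * v) - 1 = m.sum fun i v => i * v by omega, hsum]
  exact ⟨hdvd, Nat.div_pos (le_of_dvd (factorial_pos _) hdvd)
    (Nat.mul_pos (factorial_pos _) (prod_pos fun _ _ => factorial_pos _))⟩
end

section
/- Let E ≥ 1 and m₁ be natural numbers. Then ∑ over finitely supported (k₁, k₂, …) of nonnegative integers with ∑_{i≥1} kᵢ = E and ∑_{i≥1} i·kᵢ = m₁ + E of the multinomial coefficient E!/(k₁!k₂!⋯) equals C(m₁ + E − 1, m₁). -/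
/-!
Double counting of the compositions of `m₁ + E` into `E` positive parts. By stars and bars
there are `C(m₁ + E - 1, m₁)` of them. Grouped by their multiset of parts, with `kᵢ` parts
equal to `i`, each group consists of the `E! / ∏ kᵢ!` orderings of that multiset: the
symmetric group acts transitively on them, with the stabilizer `∏ Sym(kᵢ)`.
-/

open Finset Nat

section PermutationsOfMultiset

variable {ι α : Type*} [Fintype ι]

lemma Fintype.card_fiber_eq_count_map_univ [DecidableEq α] (g : ι → α) (a : α) :
    Fintype.card {i // g i = a} = (univ.val.map g).count a := by
  rw [Fintype.card_subtype, Multiset.count_map, card_def, filter_val]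
  simp only [eq_comm]

lemma Multiset.exists_map_univ_eq {m : Multiset α} (hm : Multiset.card m = Fintype.card ι) :
    ∃ g : ι → α, univ.val.map g = m := by
  induction m using Quotient.inductionOn with
  | _ l =>
    let e : ι ≃ Fin l.length := Fintype.equivFinOfCardEq hm.symm
    refine ⟨l.get ∘ e, ?_⟩
    rw [← Multiset.map_map, Multiset.map_univ_val_equiv, Fin.univ_val_map, List.ofFn_get]
    rfl

lemma exists_perm_eq_comp_of_map_univ_eq [DecidableEq α] {g g₀ : ι → α}
    (h : univ.val.map g = univ.val.map g₀) : ∃ σ : Equiv.Perm ι, g = g₀ ∘ σ := by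
  have hfiber (a : α) : {i // g i = a} ≃ {i // g₀ i = a} :=
    Fintype.equivOfCardEq <| by
      rw [Fintype.card_fiber_eq_count_map_univ, Fintype.card_fiber_eq_count_map_univ, h]
  exact ⟨Equiv.ofFiberEquiv hfiber, funext fun i => (Equiv.ofFiberEquiv_map hfiber i).symm⟩

lemma DomMulAct.mem_orbit_perm_iff_map_univ_eq [DecidableEq α] {g g₀ : ι → α} :
    g ∈ MulAction.orbit (Equiv.Perm ι)ᵈᵐᵃ g₀ ↔ univ.val.map g = univ.val.map g₀ := by
  constructor
  · rintro ⟨σ, rfl⟩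
    change univ.val.map (g₀ ∘ ⇑(DomMulAct.mk.symm σ)) = _
    rw [← Multiset.map_map, Multiset.map_univ_val_equiv]
  · intro h
    obtain ⟨σ, rfl⟩ := exists_perm_eq_comp_of_map_univ_eq h
    exact ⟨DomMulAct.mk σ, rfl⟩

lemma Multiset.countPerms_mul_prod_factorial [DecidableEq α] (m : Multiset α) :
    m.countPerms * ∏ a ∈ m.toFinset, (m.count a)! = (Multiset.card m)! := by
  rw [mul_comm, ← m.toFinset_sum_count_eq]
  exact Nat.multinomial_spec _ _

theorem Multiset.natCard_map_univ_eq_countPerms [DecidableEq ι] [DecidableEq α]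
    {m : Multiset α} (hm : Multiset.card m = Fintype.card ι) :
    Nat.card {g : ι → α // univ.val.map g = m} = m.countPerms := by
  obtain ⟨g₀, rfl⟩ := Multiset.exists_map_univ_eq hm
  set m := univ.val.map g₀
  have horbit : MulAction.orbit (Equiv.Perm ι)ᵈᵐᵃ g₀ ≃ {g : ι → α // univ.val.map g = m} :=
    Equiv.subtypeEquivRight fun _ => DomMulAct.mem_orbit_perm_iff_map_univ_eq
  have hstab : Nat.card (MulAction.stabilizer (Equiv.Perm ι)ᵈᵐᵃ g₀) =
      ∏ a ∈ m.toFinset, (m.count a)! := by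
    have e : MulAction.stabilizer (Equiv.Perm ι)ᵈᵐᵃ g₀ ≃ {σ : Equiv.Perm ι // g₀ ∘ σ = g₀} :=
      Equiv.subtypeEquiv DomMulAct.mk.symm fun _ => DomMulAct.mem_stabilizer_iff
    rw [Nat.card_congr e, Nat.card_eq_fintype_card, DomMulAct.stabilizer_card']
    refine prod_congr (by ext; simp [m]) fun a _ => ?_
    rw [Fintype.card_fiber_eq_count_map_univ]
  have horbit_stab := Nat.card_congr (MulAction.orbitProdStabilizerEquivGroup
    (Equiv.Perm ι)ᵈᵐᵃ g₀)
  rw [Nat.card_prod, Nat.card_congr horbit, hstab, Nat.card_congr DomMulAct.mk.symm,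
    Nat.card_perm, Nat.card_eq_fintype_card (α := ι), ← hm, ← m.countPerms_mul_prod_factorial]
    at horbit_stab
  exact Nat.eq_of_mul_eq_mul_right (by positivity) horbit_stab

end PermutationsOfMultiset

lemma finsum_natCard_fiber_eq_natCard {X Y : Type*} [Finite X] (Ψ : X → Y) :
    ∑ᶠ y, Nat.card {x // Ψ x = y} = Nat.card X := by
  classical
  have := Fintype.ofFinite X
  have hsupp : Function.support (fun y => Nat.card {x // Ψ x = y}) ⊆ ↑(univ.image Ψ) := by
    intro y hy
    obtain ⟨⟨x, rfl⟩⟩ := (Nat.card_ne_zero.mp hy).1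
    simp
  rw [finsum_eq_sum_of_support_subset _ hsupp, Nat.card_eq_fintype_card (α := X),
    ← Finset.card_univ,
    card_eq_sum_card_fiberwise fun x _ => mem_coe.2 (mem_image_of_mem Ψ (mem_univ x))]
  refine sum_congr rfl fun y _ => ?_
  rw [Nat.card_eq_fintype_card, Fintype.card_subtype]

lemma natCard_sum_eq_choose (ι : Type*) [Fintype ι] (s : ℕ) :
    Nat.card {f : ι → ℕ // ∑ i, f i = s} = (Fintype.card ι + s - 1).choose s := by
  classical
  rw [← Nat.card_congr (Sym.equivNatSumOfFintype ι s), Nat.card_eq_fintype_card,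
    Sym.card_sym_eq_choose]

def compositionsEquivSum (n s : ℕ) :
    {g : Fin n → ℕ // (∀ i, g i ≠ 0) ∧ ∑ i, g i = s + n} ≃
      {f : Fin n → ℕ // ∑ i, f i = s} where
  toFun g := ⟨fun i => g.1 i - 1, by
    show ∑ i, (g.1 i - 1) = s
    have h : ∑ i, (g.1 i - 1 + 1) = ∑ i, g.1 i :=
      sum_congr rfl fun i _ => Nat.sub_add_cancel (pos_of_ne_zero (g.2.1 i))
    simp only [sum_add_distrib, sum_const, Finset.card_univ, Fintype.card_fin, smul_eq_mul,
      mul_one, g.2.2] at h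
    omega⟩
  invFun f := ⟨fun i => f.1 i + 1, fun _ => succ_ne_zero _, by simp [sum_add_distrib, f.2]⟩
  left_inv g := Subtype.ext <| funext fun i => Nat.sub_add_cancel (pos_of_ne_zero (g.2.1 i))
  right_inv f := Subtype.ext <| funext fun i => Nat.add_sub_cancel (f.1 i) 1

theorem finsum_countPerms_eq_choose (n s : ℕ) :
    ∑ᶠ m : {m : Multiset ℕ // 0 ∉ m ∧ Multiset.card m = n ∧ m.sum = s + n}, m.1.countPerms =
      (s + n - 1).choose s := by
  let C := {g : Fin n → ℕ // (∀ i, g i ≠ 0) ∧ ∑ i, g i = s + n}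
  let Ψ : C → {m : Multiset ℕ // 0 ∉ m ∧ Multiset.card m = n ∧ m.sum = s + n} := fun g =>
    ⟨univ.val.map g.1, by simpa using g.2.1, by simp, g.2.2⟩
  have hfiber (m) : Nat.card {g // Ψ g = m} = m.1.countPerms := by
    rw [← Multiset.natCard_map_univ_eq_countPerms (m.2.2.1.trans (Fintype.card_fin n).symm)]
    refine Nat.card_congr <| (Equiv.subtypeEquivRight fun g => Subtype.ext_iff).trans <|
      Equiv.subtypeSubtypeEquivSubtype (q := fun g : Fin n → ℕ => univ.val.map g = m.1)
        fun {g} hg => ⟨fun i hi => m.2.1 ?_, ?_⟩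
    · exact hg ▸ hi ▸ Multiset.mem_map_of_mem g (mem_univ_val i)
    · exact (congrArg Multiset.sum hg).trans m.2.2.2
  have : Finite C :=
    .of_equiv _ ((compositionsEquivSum n s).trans (Sym.equivNatSumOfFintype _ s).symm).symm
  simp_rw [← hfiber]
  rw [finsum_natCard_fiber_eq_natCard, Nat.card_congr (compositionsEquivSum n s),
    natCard_sum_eq_choose, Fintype.card_fin, add_comm n]

lemma Multiset.toFinsupp_sum_mul (m : Multiset ℕ) :
    (m.toFinsupp.sum fun i v => i * v) = m.sum := by
  conv_rhs => rw [← m.toFinsupp_toMultiset, Finsupp.sum_toMultiset]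
  simp only [smul_eq_mul, mul_comm]

theorem fine_identity_tubdigon_general (E m₁ : ℕ) :
    ∑ᶠ k : {k : ℕ →₀ ℕ //
        k 0 = 0 ∧ (k.sum fun _ v => v) = E ∧ (k.sum fun i v => i * v) = m₁ + E},
      Nat.multinomial (k : ℕ →₀ ℕ).support (k : ℕ →₀ ℕ)
      = (m₁ + E - 1).choose m₁ := by
  let e : {m : Multiset ℕ // 0 ∉ m ∧ Multiset.card m = E ∧ m.sum = m₁ + E} ≃
      {k : ℕ →₀ ℕ // k 0 = 0 ∧ (k.sum fun _ v => v) = E ∧ (k.sum fun i v => i * v) = m₁ + E} :=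
    Multiset.toFinsupp.toEquiv.subtypeEquiv fun m => by
      rw [AddEquiv.toEquiv_eq_coe, AddEquiv.coe_toEquiv, Multiset.toFinsupp_apply,
        Multiset.count_eq_zero, Multiset.toFinsupp_sum_mul, ← Multiset.toFinsupp_sum_eq]
      rfl
  rw [← finsum_comp_equiv e]
  exact finsum_countPerms_eq_choose E m₁

/-- Fine's Identity reparametrized with `n = m₁ + E`, `r = E`: the sum of
multinomial coefficients `E!/(k₁!k₂!⋯)` over multiplicity sequences with
`∑ kᵢ = E` and `∑ i·kᵢ = m₁ + E` equals `C(m₁ + E - 1, m₁)`. -/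
theorem fine_identity_tubdigon (E m₁ : ℕ) (hE : 1 ≤ E) :
    ∑ᶠ k : {k : ℕ →₀ ℕ //
        k 0 = 0 ∧ (k.sum fun _ v => v) = E ∧ (k.sum fun i v => i * v) = m₁ + E},
      Nat.multinomial (k : ℕ →₀ ℕ).support (k : ℕ →₀ ℕ)
      = (m₁ + E - 1).choose m₁ :=
  fine_identity_tubdigon_general E m₁
end

section
/- Let S ∈ ℚ[[t₂, t₃, …, t_N]] be the formal power series S = ∑_m C_m t^m where C_m = (E_m−1)!/((V_m−1)!·∏mᵢ!), V_m = 2+∑(i−1)mᵢ, E_m = 1+∑ i·mᵢ, and the sum is over finitely supported m supported on {2,…,N}. Then S satisfies S = 1 + t₂S² + t₃S³ + ⋯ + t_N S^N. -/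
/-!
Let `G k` be the series whose coefficient at `t^m` is the Lagrange-inversion value
`k (E + k - 2)! / ((V + k - 2)! ∏ mᵢ!)` expected for `S^k` (and `G 0 = 1`). A direct factorial
computation gives `G (k+1) = G k + ∑ₚ tₚ G (k+p)`. Since `tₚ` raises the degree, this
recurrence determines the whole family from `G 0`; the families `j ↦ G j * G k` and
`j ↦ G (j + k)` both satisfy it and agree at `j = 0`, so `G k = (G 1)^k`, and the recurrence
at `k = 0` is the equation `S = 1 + ∑ₚ tₚ S^p` for `S = G 1`. The recurrence also shows that
all coefficients are natural numbers, which makes the truncating division in `C_m` exact.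
-/

open Finsupp MvPowerSeries Nat

namespace HyperCatalan

theorem degree_nat_induction {σ : Type*} {P : (σ →₀ ℕ) → ℕ → Prop}
    (zero : ∀ m, P m 0) (succ : ∀ m k, P m k →
      (∀ p, single p 1 ≤ m → ∀ j, P (m - single p 1) j) → P m (k + 1))
    (m : σ →₀ ℕ) (k : ℕ) : P m k := by
  induction hd : m.degree using Nat.strong_induction_on generalizing m k with
  | _ d ih =>
  induction k with
  | zero => exact zero m
  | succ k ihk =>
    refine succ m k ihk fun p hp j => ih _ ?_ _ j rfl
    have hmp : m p ≠ 0 := Nat.one_le_iff_ne_zero.mp (single_le_iff.mp hp)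
    have := congrArg degree (sub_add_single_one_cancel hmp)
    rw [map_add, degree_single] at this
    omega

section Recurrence

variable {R : Type*} [CommSemiring R]

/-- Satisfied by the powers `G k = T ^ k` of any solution of `T = 1 + ∑ p ∈ s, X p * T ^ p`. -/
def PowerRecurrence (s : Finset ℕ) (G : ℕ → MvPowerSeries ℕ R) : Prop :=
  ∀ k, G (k + 1) = G k + ∑ p ∈ s, X p * G (k + p)

theorem powerRecurrence_iff {s : Finset ℕ} {G : ℕ → MvPowerSeries ℕ R} :
    PowerRecurrence s G ↔ ∀ k m, coeff m (G (k + 1)) = coeff m (G k) +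
      ∑ p ∈ s, if single p 1 ≤ m then coeff (m - single p 1) (G (k + p)) else 0 := by
  simp only [PowerRecurrence, MvPowerSeries.ext_iff, map_add, map_sum, X, coeff_monomial_mul,
    one_mul]

namespace PowerRecurrence

variable {s : Finset ℕ} {G H : ℕ → MvPowerSeries ℕ R}

theorem coeff_succ (hG : PowerRecurrence s G) (k : ℕ) (m : ℕ →₀ ℕ) :
    coeff m (G (k + 1)) = coeff m (G k) +
      ∑ p ∈ s, if single p 1 ≤ m then coeff (m - single p 1) (G (k + p)) else 0 :=
  powerRecurrence_iff.mp hG k m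

theorem eq_of_apply_zero_eq (hG : PowerRecurrence s G) (hH : PowerRecurrence s H)
    (h0 : G 0 = H 0) : G = H := by
  funext k
  ext m
  induction m, k using degree_nat_induction with
  | zero m => rw [h0]
  | succ m k ihk ih =>
    rw [hG.coeff_succ, hH.coeff_succ, ihk]
    congr 1
    refine Finset.sum_congr rfl fun p _ => ?_
    split_ifs with hp
    exacts [ih p hp _, rfl]

theorem coeff_mem (hG : PowerRecurrence s G) (M : AddSubmonoid R)
    (h0 : ∀ m, coeff m (G 0) ∈ M) (k : ℕ) (m : ℕ →₀ ℕ) : coeff m (G k) ∈ M := by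
  induction m, k using degree_nat_induction with
  | zero m => exact h0 m
  | succ m k ihk ih =>
    rw [hG.coeff_succ]
    refine add_mem ihk (sum_mem fun p _ => ?_)
    split_ifs with hp
    exacts [ih p hp _, zero_mem M]

theorem mul_right (hG : PowerRecurrence s G) (c : MvPowerSeries ℕ R) :
    PowerRecurrence s fun k => G k * c := by
  intro k
  simp only [hG k, add_mul, Finset.sum_mul, mul_assoc]

theorem comp_add_right (hG : PowerRecurrence s G) (j : ℕ) :
    PowerRecurrence s fun k => G (k + j) := by
  intro k
  simpa only [add_right_comm _ j] using hG (k + j)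

theorem mul_eq_add (hG : PowerRecurrence s G) (h0 : G 0 = 1) (j k : ℕ) :
    G j * G k = G (j + k) :=
  congrFun (eq_of_apply_zero_eq (hG.mul_right (G k)) (hG.comp_add_right k) (by simp [h0])) j

theorem pow_eq (hG : PowerRecurrence s G) (h0 : G 0 = 1) (k : ℕ) : G 1 ^ k = G k := by
  induction k with
  | zero => rw [pow_zero, h0]
  | succ k ih => rw [pow_succ, ih, hG.mul_eq_add h0]

theorem eq_one_add_sum_mul_pow (hG : PowerRecurrence s G) (h0 : G 0 = 1) :
    G 1 = 1 + ∑ p ∈ s, X p * G 1 ^ p := by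
  simpa only [h0, zero_add, hG.pow_eq h0] using hG 0

end PowerRecurrence

end Recurrence

/-- In the notation of the paper, `weight (fun i => i) m = E_m - 1` and
`weight (fun i => i - 1) m = V_m - 2`. -/
noncomputable def powCoeff (k : ℕ) (m : ℕ →₀ ℕ) : ℚ :=
  k * (weight (fun i => i) m + k - 1)! /
    ((weight (fun i => i - 1) m + k)! * m.prod fun _ v => v !)

noncomputable def powSeries (s : Finset ℕ) : ℕ → MvPowerSeries ℕ ℚ
  | 0 => 1
  | k + 1 => fun m => if m.support ⊆ s then powCoeff (k + 1) m else 0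

variable {s : Finset ℕ} {m : ℕ →₀ ℕ} {k p : ℕ}

theorem powSeries_zero : powSeries s 0 = 1 := rfl

theorem coeff_powSeries (h : k ≠ 0 ∨ m ≠ 0) :
    coeff m (powSeries s k) = if m.support ⊆ s then powCoeff k m else 0 := by
  rcases eq_or_ne k 0 with rfl | hk
  · simp [powSeries, powCoeff, coeff_one, h.resolve_left (not_not.mpr rfl)]
  · obtain ⟨k, rfl⟩ := exists_eq_succ_of_ne_zero hk
    rfl

theorem coeff_zero_powSeries : coeff 0 (powSeries s k) = 1 := by
  rcases eq_or_ne k 0 with rfl | hk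
  · simp [powSeries_zero]
  · rw [coeff_powSeries (.inl hk), if_pos (by simp), powCoeff]
    simp only [map_zero, zero_add, prod_zero_index, cast_one, mul_one]
    rw [← cast_mul, mul_factorial_pred hk, div_self (by positivity)]

theorem prod_factorial_eq_mul_tsub_single (hp : m p ≠ 0) :
    (m.prod fun _ v => v !) = m p * (m - single p 1).prod fun _ v => v ! := by
  have herase : (m - single p 1).erase p = m.erase p := by
    ext i
    rcases eq_or_ne i p with rfl | hi <;> simp [*, erase_ne]
  rw [← mul_prod_erase' m p _ (fun _ => factorial_zero),
    ← mul_prod_erase' (m - single p 1) p _ (fun _ => factorial_zero), herase, ← mul_assoc,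
    tsub_apply, single_eq_same, mul_factorial_pred hp]

theorem weight_id_eq_add_degree (h0 : 0 ∉ m.support) :
    weight (fun i => i) m = weight (fun i => i - 1) m + m.degree := by
  simp only [weight_apply, degree_apply, Finsupp.sum, ← Finset.sum_add_distrib]
  refine Finset.sum_congr rfl fun i hi => ?_
  have : i ≠ 0 := fun h => h0 (h ▸ hi)
  simp only [smul_eq_mul]
  rw [← mul_add_one, Nat.sub_add_cancel (Nat.one_le_iff_ne_zero.mpr this)]

theorem powCoeff_add_tsub_single (hp : m p ≠ 0) (hp0 : p ≠ 0) :
    powCoeff (k + p) (m - single p 1) =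
      m p * (k + p) * (weight (fun i => i) m + k - 1)! /
        ((weight (fun i => i - 1) m + k + 1)! * m.prod fun _ v => v !) := by
  have hE := weight_sub_single_add (w := fun i => i) hp
  have hD := weight_sub_single_add (w := fun i => i - 1) hp
  rw [powCoeff, prod_factorial_eq_mul_tsub_single hp,
    show weight (fun i => i) (m - single p 1) + (k + p) - 1 = weight (fun i => i) m + k - 1 by
      omega,
    show weight (fun i => i - 1) (m - single p 1) + (k + p) = weight (fun i => i - 1) m + k + 1
      by omega]
  have : (m p : ℚ) ≠ 0 := cast_ne_zero.mpr hp
  push_cast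
  field_simp

theorem powCoeff_succ (h0 : 0 ∉ m.support) (hm : m ≠ 0) :
    powCoeff (k + 1) m = powCoeff k m + ∑ p ∈ m.support, powCoeff (k + p) (m - single p 1) := by
  rw [Finset.sum_congr rfl fun p hp => powCoeff_add_tsub_single (mem_support_iff.mp hp)
    (ne_of_mem_of_not_mem hp h0), ← Finset.sum_div, ← Finset.sum_mul]
  have hsum :
      ∑ p ∈ m.support, (m p : ℚ) * (k + p) = k * m.degree + weight (fun i => i) m := by
    simp only [degree_apply, weight_apply, Finsupp.sum, smul_eq_mul]
    push_cast
    rw [Finset.mul_sum, ← Finset.sum_add_distrib]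
    exact Finset.sum_congr rfl fun p _ => by ring
  have hEDF := weight_id_eq_add_degree h0
  have hF : m.degree ≠ 0 := by rwa [Ne, degree_eq_zero_iff]
  unfold powCoeff
  set E := weight (fun i => i) m
  set D := weight (fun i => i - 1) m
  set P : ℕ := (m.prod fun _ v => v !)
  have hP : (P : ℚ) ≠ 0 :=
    cast_ne_zero.mpr (Finset.prod_ne_zero_iff.mpr fun _ _ => factorial_ne_zero _)
  obtain ⟨n, hn⟩ : ∃ n, E + k = n + 1 := exists_eq_succ_of_ne_zero (by omega)
  rw [hsum, show E + (k + 1) - 1 = n + 1 by omega, show E + k - 1 = n by omega,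
    ← add_assoc, factorial_succ n, factorial_succ (D + k)]
  have hEDF' : (E : ℚ) = D + m.degree := by exact_mod_cast hEDF
  have hn' : (E : ℚ) + k = n + 1 := by exact_mod_cast hn
  push_cast
  field_simp
  linear_combination -(k + 1 : ℚ) * hn' + k * hEDF'

theorem support_tsub_single_subset_iff (hp : p ∈ s) :
    (m - single p 1).support ⊆ s ↔ m.support ⊆ s := by
  refine ⟨fun h i hi => ?_, fun h => subset_trans support_tsub h⟩
  rcases eq_or_ne i p with rfl | hip
  · exact hp
  · exact h (by simpa [single_apply, hip.symm] using hi)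

theorem powerRecurrence_powSeries (hs : 0 ∉ s) : PowerRecurrence s (powSeries s) := by
  refine powerRecurrence_iff.mpr fun k m => ?_
  rcases eq_or_ne m 0 with rfl | hm
  · simp [coeff_zero_powSeries]
  have hterm : ∀ p ∈ s,
      (if single p 1 ≤ m then coeff (m - single p 1) (powSeries s (k + p)) else 0) =
        if m.support ⊆ s then
          (if p ∈ m.support then powCoeff (k + p) (m - single p 1) else 0) else 0 :=
    fun p hp => by
      rw [coeff_powSeries (.inl (by grind))]
      simp only [support_tsub_single_subset_iff hp, single_le_iff, Nat.one_le_iff_ne_zero,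
        ← mem_support_iff]
      split_ifs <;> rfl
  rw [coeff_powSeries (.inr hm), coeff_powSeries (.inr hm), Finset.sum_congr rfl hterm]
  split_ifs with hsupp
  · rw [Finset.sum_ite_mem, Finset.inter_eq_right.mpr hsupp, powCoeff_succ (hs <| hsupp ·) hm]
  · simp

theorem coeff_powSeries_mem_range (hs : 0 ∉ s) (k : ℕ) (m : ℕ →₀ ℕ) :
    coeff m (powSeries s k) ∈ Set.range (Nat.cast : ℕ → ℚ) :=
  (powerRecurrence_powSeries hs).coeff_mem (AddMonoidHom.mrange (Nat.castAddMonoidHom ℚ))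
    (fun m => by
      rw [powSeries_zero, coeff_one]
      split_ifs
      exacts [⟨1, cast_one⟩, zero_mem _]) k m

theorem natCast_div_of_div_mem_range {a b : ℕ}
    (h : (a / b : ℚ) ∈ Set.range (Nat.cast : ℕ → ℚ)) : ((a / b : ℕ) : ℚ) = a / b := by
  obtain ⟨c, hc⟩ := h
  rcases eq_or_ne b 0 with rfl | hb
  · simp
  have : a = c * b := by
    rw [eq_div_iff (cast_ne_zero.mpr hb)] at hc
    exact_mod_cast hc.symm
  exact cast_div_charZero (Dvd.intro_left c this.symm)

theorem coeff_powSeries_one (hs : 0 ∉ s) (m : ℕ →₀ ℕ) :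
    coeff m (powSeries s 1) = if m.support ⊆ s then
      (((weight (fun i => i) m)! /
        ((weight (fun i => i - 1) m + 1)! * m.prod fun _ v => v !) : ℕ) : ℚ)
      else 0 := by
  have hmem := coeff_powSeries_mem_range hs 1 m
  rw [coeff_powSeries (.inl one_ne_zero)] at hmem ⊢
  split_ifs with hsupp
  · rw [if_pos hsupp] at hmem
    simp only [powCoeff, cast_one, one_mul, add_tsub_cancel_right] at hmem ⊢
    rw [natCast_div_of_div_mem_range (by exact_mod_cast hmem)]
    push_cast
    rfl
  · rfl

end HyperCatalan

open HyperCatalan in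
/-- Wildberger's Soft Polynomial Formula: the hyper-Catalan generating series
`S = ∑_m C_m t^m` (over types `m` supported on `{2,…,N}`, with
`C_m = (E_m-1)!/((V_m-1)!·∏ (m i)!)`) satisfies `S = 1 + t₂S² + ⋯ + t_N S^N`. -/
theorem soft_polynomial_formula (N : ℕ) (S : MvPowerSeries ℕ ℚ)
    (hS : ∀ m : ℕ →₀ ℕ, MvPowerSeries.coeff m S =
      if ∀ i ∈ m.support, 2 ≤ i ∧ i ≤ N then
        ((((1 + m.sum fun i v => i * v) - 1).factorial /
            (((2 + m.sum fun i v => (i - 1) * v) - 1).factorial *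
              m.prod fun _ v => v.factorial) : ℕ) : ℚ)
      else 0) :
    S = 1 + ∑ i ∈ Finset.Icc 2 N, MvPowerSeries.X i * S ^ i := by
  have hs : 0 ∉ Finset.Icc 2 N := by simp
  have hS1 : S = powSeries (Finset.Icc 2 N) 1 := by
    ext m
    have hsupp : (∀ i ∈ m.support, 2 ≤ i ∧ i ≤ N) ↔ m.support ⊆ Finset.Icc 2 N := by
      simp [Finset.subset_iff]
    simp only [hS, coeff_powSeries_one hs, hsupp, weight_apply, smul_eq_mul, mul_comm,
      add_tsub_cancel_left, show ∀ n, 2 + n - 1 = n + 1 from fun n => by omega]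
  rw [hS1]
  exact (powerRecurrence_powSeries hs).eq_one_add_sum_mul_pow powSeries_zero
end

section
/- Let T ∈ ℚ[[t₁, t₂, …, t_N]] satisfy T = 1 + t₁T + t₂T² + ⋯ + t_N T^N with constant term 1. Then the coefficient of t₁^{m₁} t₂^{m₂} ⋯ in T equals (m₁ + E_m − 1)!/((V_m − 1)!·m₁!·∏_{i≥2} mᵢ!), where E_m = 1 + ∑_{i≥2} i·mᵢ and V_m = 2 + ∑_{i≥2}(i−1)mᵢ. -/
/-!
Expanding `T ^ (k + 1) = T * T ^ k = T ^ k + ∑ᵢ tᵢ T ^ (i + k)` gives a recursion for the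
coefficients of all powers of `T` at once, by induction on the total degree of the monomial `t^d`
and then on `k`. The generalized Raney numbers
`k (s + k - 1)! / ((q + k)! ∏ dᵢ!)`, with `s = ∑ i dᵢ` and `q = ∑ (i - 1) dᵢ`, satisfy the same
recursion, because `(k + 1)(s + k) = k (q + k + 1) + ∑ (i + k) dᵢ` when `s = q + ∑ dᵢ`.
The recursion also shows that every coefficient is a natural number, so the rational formula at
`k = 1` is an exact division of natural numbers.
-/

open Finset Finsupp MvPowerSeries
open scoped Nat

namespace Tubdigon

theorem induction_on_degree {σ : Type*} {P : ℕ → (σ →₀ ℕ) → Prop} (zero : ∀ d, P 0 d)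
    (succ : ∀ k d, P k d → (∀ i ∈ d.support, ∀ j, P j (d - single i 1)) → P (k + 1) d)
    (k : ℕ) (d : σ →₀ ℕ) : P k d := by
  induction h : degree d using Nat.strong_induction_on generalizing k d with
  | _ n ih =>
    induction k with
    | zero => exact zero d
    | succ k ihk =>
      refine succ k d ihk fun i hi j => ih _ ?_ j _ rfl
      have := weight_sub_single_add (w := fun _ => 1) (mem_support_iff.mp hi)
      rw [← degree_eq_weight_one] at this
      omega

theorem coeff_X_mul {σ R : Type*} [CommSemiring R] [DecidableEq σ] (i : σ) (d : σ →₀ ℕ)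
    (f : MvPowerSeries σ R) :
    coeff d (X i * f) = if i ∈ d.support then coeff (d - single i 1) f else 0 := by
  simp only [X_def, coeff_monomial_mul, one_mul, mem_support_iff, ← Nat.one_le_iff_ne_zero,
    ← single_le_iff]

theorem prod_factorial_add_single {σ : Type*} [DecidableEq σ] (f : σ →₀ ℕ) (i : σ) :
    (f + single i 1).prod (fun _ m => m !) = (f i + 1) * f.prod fun _ m => m ! := by
  rw [← mul_prod_erase' _ i _ fun _ => Nat.factorial_zero,
    ← mul_prod_erase' f i _ fun _ => Nat.factorial_zero, erase_add, erase_single, add_zero,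
    Finsupp.add_apply, single_eq_same, Nat.factorial_succ, mul_assoc]

theorem weight_id_eq_degree_add {d : ℕ →₀ ℕ} (hd0 : d 0 = 0) :
    weight (fun i => i) d = degree d + weight (· - 1) d := by
  simp only [weight_apply, degree_apply, Finsupp.sum, ← sum_add_distrib, smul_eq_mul]
  refine sum_congr rfl fun i hi => ?_
  obtain ⟨j, rfl⟩ : ∃ j, i = j + 1 :=
    Nat.exists_eq_add_one.mpr (Nat.pos_of_ne_zero fun h => mem_support_iff.mp hi (h ▸ hd0))
  simp only [Nat.add_sub_cancel]
  ring

theorem sum_add_mul_eq_weight_add {d : ℕ →₀ ℕ} (k : ℕ) :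
    ∑ i ∈ d.support, (i + k) * d i = weight (fun i => i) d + k * degree d := by
  simp only [weight_apply, degree_apply, Finsupp.sum, Finset.mul_sum, ← sum_add_distrib,
    smul_eq_mul]
  exact sum_congr rfl fun i _ => by ring

@[to_additive]
theorem prod_eq_mul_prod_filter_two_le {M : Type*} [CommMonoid M] {d : ℕ →₀ ℕ} (hd0 : d 0 = 0)
    {g : ℕ → ℕ → M} (hg : ∀ i, g i 0 = 1) :
    d.prod g = g 1 (d 1) * ∏ i ∈ d.support.filter (2 ≤ ·), g i (d i) := by
  refine (prod_of_support_subset d (s := insert 1 (d.support.filter (2 ≤ ·))) ?_ g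
    fun i _ => hg i).trans (prod_insert (by simp))
  intro i hi
  have : i ≠ 0 := by rintro rfl; exact mem_support_iff.mp hi hd0
  rw [mem_insert, mem_filter]
  by_cases h : 2 ≤ i
  exacts [.inr ⟨hi, h⟩, .inl (by omega)]

theorem weight_eq_add_sum_filter_two_le {d : ℕ →₀ ℕ} (hd0 : d 0 = 0) (w : ℕ → ℕ) :
    weight w d = d 1 * w 1 + ∑ i ∈ d.support.filter (2 ≤ ·), w i * d i := by
  rw [weight_apply,
    sum_eq_add_sum_filter_two_le hd0 (g := fun i c => c • w i) fun _ => zero_smul _ _]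
  simp only [smul_eq_mul, mul_comm]

theorem natCast_div_of_div_eq_natCast {K : Type*} [DivisionRing K] [CharZero K] {a b m : ℕ}
    (h : (a : K) / b = m) : ((a / b : ℕ) : K) = a / b := by
  obtain rfl | hb := eq_or_ne b 0
  · simp
  have hb' : (b : K) ≠ 0 := Nat.cast_ne_zero.mpr hb
  have hab : (a : K) = b * m := by rw [(div_eq_iff hb').mp h, Nat.cast_comm]
  exact Nat.cast_div ⟨m, by exact_mod_cast hab⟩ hb'

section FixedPoint

variable {R : Type*} [CommSemiring R] {s : Finset ℕ} {T : MvPowerSeries ℕ R}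

theorem constantCoeff_eq_one (hT : T = 1 + ∑ i ∈ s, X i * T ^ i) : constantCoeff T = 1 := by
  rw [hT]; simp

theorem coeff_pow_succ (hT : T = 1 + ∑ i ∈ s, X i * T ^ i) {d : ℕ →₀ ℕ} (hd : d.support ⊆ s)
    (k : ℕ) : coeff d (T ^ (k + 1)) =
      coeff d (T ^ k) + ∑ i ∈ d.support, coeff (d - single i 1) (T ^ (i + k)) := by
  have hpow : T ^ (k + 1) = T ^ k + ∑ i ∈ s, X i * T ^ (i + k) := by
    rw [pow_succ']
    nth_rewrite 1 [hT]
    simp only [add_mul, one_mul, Finset.sum_mul, mul_assoc, pow_add]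
  rw [hpow, map_add, map_sum]
  simp only [coeff_X_mul, sum_ite_mem, inter_eq_right.mpr hd]

theorem coeff_pow_mem_bot (hT : T = 1 + ∑ i ∈ s, X i * T ^ i) (k : ℕ) (d : ℕ →₀ ℕ)
    (hd : d.support ⊆ s) : coeff d (T ^ k) ∈ (⊥ : Subsemiring R) := by
  induction k, d using induction_on_degree with
  | zero d =>
    rw [pow_zero, coeff_one]
    split_ifs
    exacts [one_mem _, zero_mem _]
  | succ k d ihk ih =>
    rw [coeff_pow_succ hT hd]
    exact add_mem (ihk hd) (sum_mem fun i hi => ih i hi _ (support_tsub.trans hd))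

end FixedPoint

/-- The coefficient of `t^d` in `T ^ k`, except at `k = 0`, `d = 0`, where the truncated
subtraction `s + k - 1` gives `0` instead of `1`. -/
noncomputable def raney (k : ℕ) (d : ℕ →₀ ℕ) : ℚ :=
  k * (weight (fun i => i) d + k - 1)! /
    ((weight (· - 1) d + k)! * d.prod fun _ m => m !)

theorem raney_zero_left (d : ℕ →₀ ℕ) : raney 0 d = 0 := by
  simp [raney]

theorem raney_zero_right {k : ℕ} (hk : k ≠ 0) : raney k 0 = 1 := by
  obtain ⟨j, rfl⟩ := Nat.exists_eq_succ_of_ne_zero hk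
  simp only [raney, map_zero, prod_zero_index, zero_add, Nat.factorial_succ]
  push_cast
  field_simp

theorem raney_one (d : ℕ →₀ ℕ) :
    raney 1 d = (weight (fun i => i) d)! / ((weight (· - 1) d + 1)! * d.prod fun _ m => m !) := by
  simp [raney]

theorem raney_add_sub_single {d : ℕ →₀ ℕ} (hd0 : d 0 = 0) {i : ℕ} (hi : i ∈ d.support) (k : ℕ) :
    raney (i + k) (d - single i 1) = ((i + k) * d i : ℕ) * ((weight (fun i => i) d + k - 1)! /
      ((weight (· - 1) d + k + 1)! * d.prod fun _ m => m !)) := by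
  have hdi : d i ≠ 0 := mem_support_iff.mp hi
  have hi0 : i ≠ 0 := by rintro rfl; exact hdi hd0
  have hid := weight_sub_single_add (w := fun i => i) hdi
  have hpred := weight_sub_single_add (w := (· - 1)) hdi
  have hprod := prod_factorial_add_single (d - single i 1) i
  rw [sub_add_single_one_cancel hdi, tsub_apply, single_eq_same] at hprod
  rw [raney, hprod, show weight (fun i => i) (d - single i 1) + (i + k) - 1 =
      weight (fun i => i) d + k - 1 by omega,
    show weight (· - 1) (d - single i 1) + (i + k) = weight (· - 1) d + k + 1 by omega,
    Nat.sub_add_cancel (Nat.one_le_iff_ne_zero.mpr hdi)]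
  push_cast
  field_simp

theorem raney_succ {d : ℕ →₀ ℕ} (hd0 : d 0 = 0) (hd : d ≠ 0) (k : ℕ) :
    raney (k + 1) d = raney k d + ∑ i ∈ d.support, raney (i + k) (d - single i 1) := by
  rw [sum_congr rfl fun i hi => raney_add_sub_single hd0 hi k, ← Finset.sum_mul, ← Nat.cast_sum,
    sum_add_mul_eq_weight_add, weight_id_eq_degree_add hd0]
  have hdeg : degree d ≠ 0 := (degree_eq_zero_iff d).not.mpr hd
  obtain ⟨c, hc⟩ : ∃ c, degree d + weight (· - 1) d + k = c + 1 :=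
    Nat.exists_eq_add_one.mpr (by omega)
  simp only [raney, weight_id_eq_degree_add hd0, hc, Nat.add_sub_cancel,
    show degree d + weight (· - 1) d + (k + 1) = c + 1 + 1 by omega,
    show weight (· - 1) d + (k + 1) = weight (· - 1) d + k + 1 by omega, Nat.factorial_succ]
  push_cast
  field_simp
  have hcQ : ((degree d : ℕ) + (weight (· - 1) d : ℕ) + k : ℚ) = c + 1 := by exact_mod_cast hc
  congr 1
  linear_combination -(k + 1) * hcQ

theorem coeff_pow_eq_raney {s : Finset ℕ} {T : MvPowerSeries ℕ ℚ}
    (hT : T = 1 + ∑ i ∈ s, X i * T ^ i) (hs0 : 0 ∉ s) (k : ℕ) (d : ℕ →₀ ℕ)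
    (hd : d.support ⊆ s) (hkd : k ≠ 0 ∨ d ≠ 0) : coeff d (T ^ k) = raney k d := by
  induction k, d using induction_on_degree with
  | zero d =>
    rw [pow_zero, coeff_one, if_neg (hkd.resolve_left (not_not.mpr rfl)), raney_zero_left]
  | succ k d ihk ih =>
    obtain rfl | hd0 := eq_or_ne d 0
    · rw [coeff_zero_eq_constantCoeff_apply, map_pow, constantCoeff_eq_one hT, one_pow,
        raney_zero_right k.succ_ne_zero]
    have hi0 : ∀ i ∈ d.support, i ≠ 0 := fun i hi h => hs0 (h ▸ hd hi)
    rw [coeff_pow_succ hT hd, ihk hd (.inr hd0),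
      raney_succ (notMem_support_iff.mp fun h => hi0 0 h rfl) hd0]
    exact congrArg _ <| sum_congr rfl fun i hi =>
      ih i hi _ (support_tsub.trans hd) (.inl (by have := hi0 i hi; omega))

end Tubdigon

open Tubdigon Finsupp Finset in
theorem tubdigon_series_coeff_general (N : ℕ) (T : MvPowerSeries ℕ ℚ)
    (hT : T = 1 + ∑ i ∈ Finset.Icc 1 N, MvPowerSeries.X i * T ^ i) :
    ∀ d : ℕ →₀ ℕ, d 0 = 0 → (∀ i > N, d i = 0) →
      MvPowerSeries.coeff (R := ℚ) d T =
        (((d 1 + (1 + ∑ i ∈ d.support.filter (2 ≤ ·), i * d i) - 1).factorial /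
            (((2 + ∑ i ∈ d.support.filter (2 ≤ ·), (i - 1) * d i) - 1).factorial *
              (d 1).factorial *
              ∏ i ∈ d.support.filter (2 ≤ ·), (d i).factorial) : ℕ) : ℚ) := by
  intro d hd0 hdN
  have hd : d.support ⊆ Icc 1 N := fun i hi => mem_Icc.mpr
    ⟨Nat.pos_of_ne_zero (by rintro rfl; exact mem_support_iff.mp hi hd0),
      not_lt.mp fun h => mem_support_iff.mp hi (hdN i h)⟩
  have hcoeff : MvPowerSeries.coeff d T = raney 1 d := by
    simpa using coeff_pow_eq_raney hT (by simp) 1 d hd (.inl one_ne_zero)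
  obtain ⟨m, hm⟩ := Subsemiring.mem_bot.mp (pow_one T ▸ coeff_pow_mem_bot hT 1 d hd)
  have hs : weight (fun i => i) d = d 1 + (1 + ∑ i ∈ d.support.filter (2 ≤ ·), i * d i) - 1 := by
    rw [weight_eq_add_sum_filter_two_le hd0]; omega
  have hq : weight (· - 1) d + 1 = (2 + ∑ i ∈ d.support.filter (2 ≤ ·), (i - 1) * d i) - 1 := by
    rw [weight_eq_add_sum_filter_two_le hd0]; omega
  have hraney := raney_one d
  rw [hs, hq, prod_eq_mul_prod_filter_two_le hd0 fun _ => Nat.factorial_zero, ← Nat.cast_mul,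
    ← Nat.mul_assoc] at hraney
  rw [hcoeff, hraney] at hm ⊢
  exact (natCast_div_of_div_eq_natCast hm.symm).symm

/-- The tubdigon generating series: if `T ∈ ℚ[[t₁,…,t_N]]` has constant term `1`
and satisfies `T = 1 + t₁T + t₂T² + ⋯ + t_N T^N`, then the coefficient of
`t₁^{m₁} t₂^{m₂} ⋯` in `T` is `(m₁ + E_m - 1)!/((V_m - 1)!·m₁!·∏_{i≥2}(mᵢ)!)`. -/
theorem tubdigon_series_coeff (N : ℕ) (T : MvPowerSeries ℕ ℚ)
    (hconst : MvPowerSeries.constantCoeff (σ := ℕ) (R := ℚ) T = 1)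
    (hT : T = 1 + ∑ i ∈ Finset.Icc 1 N, MvPowerSeries.X i * T ^ i) :
    ∀ d : ℕ →₀ ℕ, d 0 = 0 → (∀ i > N, d i = 0) →
      MvPowerSeries.coeff (R := ℚ) d T =
        (((d 1 + (1 + ∑ i ∈ d.support.filter (2 ≤ ·), i * d i) - 1).factorial /
            (((2 + ∑ i ∈ d.support.filter (2 ≤ ·), (i - 1) * d i) - 1).factorial *
              (d 1).factorial *
              ∏ i ∈ d.support.filter (2 ≤ ·), (d i).factorial) : ℕ) : ℚ) :=
  tubdigon_series_coeff_general N T hT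
end
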